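/- For every ε ∈ (0, 1/2) there exist a constant C > 0 and a threshold N such that for every prime p ≥ N, every primitive root τ modulo p, every divisor d of p − 1, and every integer a with 1 ≤ a ≤ p − 1, the complete exponential sum over reduced residues satisfies |Σ_{1 ≤ n ≤ (p−1)/d, gcd(n, (p−1)/d) = 1} e(a τ^{dn} / p)| ≤ C p^{1−ε}. -/

import Mathlib

/-!
Writing `x = τ ^ d`, an element of order `M = (p - 1) / d`, the sum runs over the generators
`x ^ n` of `⟨x⟩`. Möbius inversion in `gcd(n, M)` turns it into `∑_{k ∣ M} μ(k) T_k(a)` with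
Gauss periods `T_k(c) = ∑_{y ∈ ⟨x ^ k⟩} ψ(c y)`. Each is at most `√p`: `T_k` is constant on the
coset `a⟨x ^ k⟩`, and by orthogonality of additive characters
`∑_c |∑_{y ∈ S} ψ(c y)|² = p |S|` for every set `S`. Only the `2 ^ ω(M) ≪_δ M ^ δ` squarefree
`k` contribute, so the sum is `≪ p ^ (1/2 + δ)`; take `δ = 1/2 - ε`.
-/

open Finset ArithmeticFunction
open scoped ArithmeticFunction.Moebius

/-- `e z = exp(2 π i z)`. -/
noncomputable def e (z : ℝ) : ℂ := Complex.exp (2 * Real.pi * Complex.I * z)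

theorem Nat.card_divisors_filter_squarefree {n : ℕ} (hn : n ≠ 0) :
    #{k ∈ n.divisors | Squarefree k} = 2 ^ #n.primeFactors := by
  rw [card_eq_sum_ones, Nat.sum_divisors_filter_squarefree hn, sum_const, card_powerset,
    Nat.factors_eq, List.toFinset_coe, Nat.toFinset_factors, smul_eq_mul, mul_one]

theorem two_pow_card_primeFactors_le {δ : ℝ} (hδ : 0 < δ) :
    ∃ K : ℝ, 0 < K ∧ ∀ n : ℕ, n ≠ 0 → (2 : ℝ) ^ #n.primeFactors ≤ K * (n : ℝ) ^ δ := by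
  -- primes `q ≥ B` satisfy `2 ≤ q ^ δ`; fewer than `B` primes lie below `B`
  set B : ℕ := ⌈(2 : ℝ) ^ δ⁻¹⌉₊
  refine ⟨2 ^ B, by positivity, fun n hn => ?_⟩
  set L := {q ∈ n.primeFactors | B ≤ q}
  have small : #{q ∈ n.primeFactors | ¬B ≤ q} ≤ B :=
    (card_le_card fun q hq => mem_range.2 (not_le.1 (mem_filter.1 hq).2)).trans (card_range B).le
  have large : (2 : ℝ) ^ #L ≤ (n : ℝ) ^ δ := by
    have two_le : ∀ q ∈ L, (2 : ℝ) ≤ (q : ℝ) ^ δ := fun q hq => by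
      have hBq : (2 : ℝ) ^ δ⁻¹ ≤ q :=
        (Nat.le_ceil _).trans (by exact_mod_cast (mem_filter.1 hq).2)
      calc (2 : ℝ) = ((2 : ℝ) ^ δ⁻¹) ^ δ := by
            rw [← Real.rpow_mul zero_le_two, inv_mul_cancel₀ hδ.ne', Real.rpow_one]
        _ ≤ (q : ℝ) ^ δ := by gcongr
    have prod_le : ∏ q ∈ L, q ≤ n :=
      Nat.le_of_dvd (Nat.pos_of_ne_zero hn)
        ((prod_dvd_prod_of_subset _ _ _ (filter_subset _ _)).trans (Nat.prod_primeFactors_dvd n))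
    calc (2 : ℝ) ^ #L = ∏ _q ∈ L, (2 : ℝ) := (prod_const _).symm
      _ ≤ ∏ q ∈ L, (q : ℝ) ^ δ := prod_le_prod (fun _ _ => zero_le_two) two_le
      _ = ((∏ q ∈ L, q : ℕ) : ℝ) ^ δ := by
          rw [Nat.cast_prod, Real.finsetProd_rpow _ _ fun q _ => Nat.cast_nonneg q]
      _ ≤ (n : ℝ) ^ δ := by gcongr
  calc (2 : ℝ) ^ #n.primeFactors = 2 ^ #{q ∈ n.primeFactors | ¬B ≤ q} * 2 ^ #L := by
        rw [← pow_add, add_comm, card_filter_add_card_filter_not]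
    _ ≤ 2 ^ B * (n : ℝ) ^ δ := by gcongr; norm_num

theorem card_divisors_filter_squarefree_le {δ : ℝ} (hδ : 0 < δ) :
    ∃ K : ℝ, 0 < K ∧
      ∀ n : ℕ, n ≠ 0 → (#{k ∈ n.divisors | Squarefree k} : ℝ) ≤ K * (n : ℝ) ^ δ := by
  obtain ⟨K, hK, h⟩ := two_pow_card_primeFactors_le hδ
  refine ⟨K, hK, fun n hn => ?_⟩
  rw [Nat.card_divisors_filter_squarefree hn, Nat.cast_pow, Nat.cast_ofNat]
  exact h n hn

theorem Nat.sum_moebius_divisors (n : ℕ) : ∑ k ∈ n.divisors, μ k = if n = 1 then 1 else 0 := by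
  rw [← coe_mul_zeta_apply, moebius_mul_coe_zeta, one_apply]

theorem Finset.sum_Icc_filter_dvd_eq {M : Type*} [AddCommMonoid M] (f : ℕ → M) (N : ℕ) {k : ℕ}
    (hk : k ≠ 0) : ∑ n ∈ Icc 1 N with k ∣ n, f n = ∑ m ∈ Icc 1 (N / k), f (k * m) := by
  have hk0 := Nat.pos_of_ne_zero hk
  symm
  refine sum_nbij' (k * ·) (· / k) (fun m hm => ?_) (fun n hn => ?_) (fun m _ => ?_)
    (fun n hn => ?_) fun _ _ => rfl
  · simp only [mem_filter, mem_Icc] at hm ⊢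
    refine ⟨⟨Nat.mul_pos hk0 hm.1, ?_⟩, dvd_mul_right k m⟩
    rw [mul_comm, ← Nat.le_div_iff_mul_le hk0]
    exact hm.2
  · simp only [mem_filter, mem_Icc] at hn ⊢
    obtain ⟨⟨hn1, hnN⟩, c, rfl⟩ := hn
    rw [Nat.mul_div_cancel_left c hk0]
    exact ⟨Nat.pos_of_mul_pos_left hn1, (Nat.le_div_iff_mul_le hk0).2 (by rwa [mul_comm])⟩
  · simp [Nat.mul_div_cancel_left m hk0]
  · exact Nat.mul_div_cancel' (mem_filter.1 hn).2

theorem sum_filter_coprime_eq_sum_moebius_smul {M : Type*} [AddCommGroup M] (f : ℕ → M) {N : ℕ}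
    (hN : N ≠ 0) :
    ∑ n ∈ Icc 1 N with n.gcd N = 1, f n =
      ∑ k ∈ N.divisors, μ k • ∑ m ∈ Icc 1 (N / k), f (k * m) := by
  have divisors_gcd : ∀ n, {k ∈ N.divisors | k ∣ n} = (n.gcd N).divisors := fun n => by
    ext k; simp [Nat.dvd_gcd_iff, hN, and_comm]
  calc ∑ n ∈ Icc 1 N with n.gcd N = 1, f n
      = ∑ n ∈ Icc 1 N, (∑ k ∈ (n.gcd N).divisors, μ k) • f n := by
        rw [sum_filter]
        simp_rw [Nat.sum_moebius_divisors, ite_smul, one_smul, zero_smul]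
    _ = ∑ k ∈ N.divisors, μ k • ∑ n ∈ Icc 1 N with k ∣ n, f n := by
        simp_rw [← divisors_gcd, sum_filter, sum_smul, smul_sum, smul_ite, smul_zero, ite_smul,
          zero_smul]
        rw [sum_comm]
    _ = _ := sum_congr rfl fun k hk => by
        rw [sum_Icc_filter_dvd_eq f N (Nat.pos_of_mem_divisors hk).ne']

theorem Finset.sum_range_succ_eq_of_eq {M : Type*} [AddCommGroup M] {f : ℕ → M} {r : ℕ}
    (h : f r = f 0) : ∑ i ∈ range r, f (i + 1) = ∑ i ∈ range r, f i := by
  have := (sum_range_succ' f r).symm.trans (sum_range_succ f r)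
  rwa [h, add_left_inj] at this

theorem Finset.sum_Icc_one_eq_sum_range_of_eq {M : Type*} [AddCommGroup M] {f : ℕ → M} {r : ℕ}
    (h : f r = f 0) : ∑ i ∈ Icc 1 r, f i = ∑ i ∈ range r, f i := by
  rw [← sum_range_succ_eq_of_eq h, range_eq_Ico, sum_Ico_add' f 0 r 1]
  rfl

namespace AddChar

theorem sum_norm_sq_sum_mul_eq {R : Type*} [CommRing R] [Fintype R] {ψ : AddChar R ℂ}
    (hψ : ψ.IsPrimitive) (S : Finset R) :
    ∑ c, ‖∑ s ∈ S, ψ (c * s)‖ ^ 2 = Fintype.card R * #S := by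
  classical
  have norm_sq : ∀ c, (‖∑ s ∈ S, ψ (c * s)‖ ^ 2 : ℂ) = ∑ s ∈ S, ∑ t ∈ S, ψ (c * (s - t)) :=
    fun c => by
      rw [← Complex.mul_conj', map_sum, sum_mul_sum]
      refine sum_congr rfl fun s _ => sum_congr rfl fun t _ => ?_
      rw [← map_neg_eq_conj, ← map_add_eq_mul, mul_sub, sub_eq_add_neg]
  have orth : ∀ s t : R, ∑ c, ψ (c * (s - t)) = if s = t then (Fintype.card R : ℂ) else 0 :=
    fun s t => by simp_rw [sum_mulShift _ hψ, sub_eq_zero, Nat.cast_ite, Nat.cast_zero]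
  apply Complex.ofReal_injective
  push_cast
  simp_rw [norm_sq]
  rw [sum_comm]
  simp_rw [sum_comm (s := univ), orth, sum_ite_eq, sum_ite_mem, inter_self, sum_const,
    nsmul_eq_mul, mul_comm]

variable {F : Type*} [Field F] [Fintype F] {ψ : AddChar F ℂ}

theorem norm_sum_range_orderOf_le_sqrt_card (hψ : ψ.IsPrimitive) {b : F} (hb : b ≠ 0) (g : F) :
    ‖∑ m ∈ range (orderOf g), ψ (b * g ^ m)‖ ≤ √(Fintype.card F) := by
  classical
  set r := orderOf g
  set T : F → ℂ := fun c => ∑ m ∈ range r, ψ (c * g ^ m)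
  rcases Nat.eq_zero_or_pos r with hr | hr
  · simp [hr]
  have pow_injOn : Set.InjOn (g ^ ·) (range r) := fun m hm n hn =>
    pow_injOn_Iio_orderOf (by simpa using hm) (by simpa using hn)
  have coset_injOn : Set.InjOn (b * g ^ ·) (range r) := fun m hm n hn h =>
    pow_injOn hm hn (mul_left_cancel₀ hb h)
  have T_mul_gen : ∀ c, T (c * g) = T c := fun c => by
    simp only [T, mul_assoc, ← pow_succ']
    exact sum_range_succ_eq_of_eq (f := fun m => ψ (c * g ^ m)) (by simp [r, pow_orderOf_eq_one])
  have T_coset : ∀ j, T (b * g ^ j) = T b := fun j => by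
    induction j with
    | zero => simp
    | succ j ih => rw [pow_succ, ← mul_assoc, T_mul_gen, ih]
  have key : r * ‖T b‖ ^ 2 ≤ Fintype.card F * r := calc
    r * ‖T b‖ ^ 2 = ∑ j ∈ range r, ‖T (b * g ^ j)‖ ^ 2 := by simp [T_coset]
    _ = ∑ c ∈ (range r).image (b * g ^ ·), ‖T c‖ ^ 2 :=
        (sum_image (f := fun c => ‖T c‖ ^ 2) coset_injOn).symm
    _ ≤ ∑ c, ‖T c‖ ^ 2 := sum_le_univ_sum_of_nonneg fun _ => sq_nonneg _
    _ = ∑ c, ‖∑ s ∈ (range r).image (g ^ ·), ψ (c * s)‖ ^ 2 := by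
        simp only [T, sum_image pow_injOn]
    _ = Fintype.card F * r := by
        rw [sum_norm_sq_sum_mul_eq hψ, card_image_of_injOn pow_injOn, card_range]
  exact Real.le_sqrt_of_sq_le (le_of_mul_le_mul_left (by linarith [key]) (Nat.cast_pos.2 hr))

theorem norm_sum_coprime_orderOf_le (hψ : ψ.IsPrimitive) {b : F} (hb : b ≠ 0) (t : F) :
    ‖∑ n ∈ Icc 1 (orderOf t) with n.gcd (orderOf t) = 1, ψ (b * t ^ n)‖ ≤
      #{k ∈ (orderOf t).divisors | Squarefree k} * √(Fintype.card F) := by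
  set N := orderOf t
  rcases eq_or_ne N 0 with hN | hN
  · simp [hN]
  have period_le : ∀ k ∈ N.divisors,
      ‖∑ m ∈ Icc 1 (N / k), ψ (b * t ^ (k * m))‖ ≤ √(Fintype.card F) := fun k hk => by
    have hord : orderOf (t ^ k) = N / k :=
      orderOf_pow_of_dvd (Nat.pos_of_mem_divisors hk).ne' (Nat.dvd_of_mem_divisors hk)
    simp_rw [pow_mul, ← hord]
    rw [sum_Icc_one_eq_sum_range_of_eq (by simp [pow_orderOf_eq_one])]
    exact norm_sum_range_orderOf_le_sqrt_card hψ hb _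
  rw [sum_filter_coprime_eq_sum_moebius_smul _ hN]
  calc _ ≤ ∑ k ∈ N.divisors, ‖μ k • ∑ m ∈ Icc 1 (N / k), ψ (b * t ^ (k * m))‖ :=
        norm_sum_le _ _
    _ ≤ ∑ k ∈ N.divisors, if Squarefree k then √(Fintype.card F) else 0 := by
        refine sum_le_sum fun k hk => ?_
        rw [norm_zsmul ℝ, Real.norm_eq_abs, ← Int.cast_abs, abs_moebius]
        split_ifs
        · simpa using period_le k hk
        · simp
    _ = _ := by rw [sum_ite, sum_const_zero, add_zero, sum_const, nsmul_eq_mul]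

end AddChar

theorem e_natCast_div_eq_stdAddChar {p : ℕ} [NeZero p] (m : ℕ) :
    e (m / p) = ZMod.stdAddChar (m : ZMod p) := by
  have h := ZMod.stdAddChar_coe (N := p) m
  rw [Int.cast_natCast] at h
  rw [h, e]
  push_cast
  ring_nf

/-- complete exponential sum over reduced residues. -/
theorem stmt_13 (ε : ℝ) (hε : ε ∈ Set.Ioo (0 : ℝ) (1 / 2)) :
    ∃ C > (0 : ℝ), ∃ N : ℕ, ∀ p : ℕ, p.Prime → N ≤ p →
    ∀ τ : ℤ, orderOf ((τ : ZMod p)) = p - 1 →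
    ∀ d : ℕ, d ∣ p - 1 → ∀ a : ℕ, 1 ≤ a → a ≤ p - 1 →
    ‖(∑ n ∈ (Finset.Icc 1 ((p - 1) / d)).filter
        (fun n => Nat.gcd n ((p - 1) / d) = 1),
        e ((a * ((τ : ZMod p) ^ (d * n)).val : ℕ) / p))‖ ≤
      C * (p : ℝ) ^ (1 - ε) := by
  have hδ : 0 < 1 / 2 - ε := sub_pos.2 hε.2
  obtain ⟨K, hK, hdiv⟩ := card_divisors_filter_squarefree_le hδ
  refine ⟨K, hK, 0, fun p hp _ τ hτ d hd a ha1 hap => ?_⟩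
  have := Fact.mk hp
  have hp1 : p - 1 ≠ 0 := by have := hp.two_le; omega
  have hM : orderOf ((τ : ZMod p) ^ d) = (p - 1) / d :=
    hτ ▸ orderOf_pow_of_dvd (ne_zero_of_dvd_ne_zero hp1 hd) (hτ ▸ hd)
  have ha : (a : ZMod p) ≠ 0 := by
    rw [Ne, ZMod.natCast_eq_zero_iff]
    exact fun h => absurd (Nat.le_of_dvd ha1 h) (by omega)
  have period := AddChar.norm_sum_coprime_orderOf_le (ZMod.isPrimitive_stdAddChar p) ha
    ((τ : ZMod p) ^ d)
  rw [hM, ZMod.card] at period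
  simp_rw [e_natCast_div_eq_stdAddChar, Nat.cast_mul, ZMod.natCast_val, ZMod.cast_id', id,
    pow_mul]
  calc _ ≤ #{k ∈ ((p - 1) / d).divisors | Squarefree k} * √p := period
    _ ≤ K * (((p - 1) / d : ℕ) : ℝ) ^ (1 / 2 - ε) * √p := by
        gcongr
        exact hdiv _ (Nat.div_ne_zero_iff_of_dvd hd |>.2 ⟨hp1, ne_zero_of_dvd_ne_zero hp1 hd⟩)
    _ ≤ K * (p : ℝ) ^ (1 / 2 - ε) * √p := by
        gcongr
        exact (Nat.div_le_self _ _).trans (Nat.sub_le p 1)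
    _ = K * (p : ℝ) ^ (1 - ε) := by
        rw [Real.sqrt_eq_rpow, mul_assoc, ← Real.rpow_add (Nat.cast_pos.2 hp.pos)]
        ring_nf
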